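/- Let X be the Jacobi matrix of the Jacobi sequence ω n = (n+1)²/((2n+1)(2n+3)) and α n = 0 (the quantum decomposition of the uniform distribution on [−1,1]). Then for every natural number m, lim_{k→∞} ⟨(X/√(ω k + ω(k−1)))^m e_k, e_k⟩ = ∫_{−√2}^{√2} x^m/(π√(2−x²)) dx. -/

import Mathlib

open Filter

/-- The Jacobi matrix of a Jacobi sequence `(ω, α)`, acting on finitely supported
real sequences indexed by `ℕ`:
`X e_n = √(ω n)·e_{n+1} + α n·e_n + √(ω (n-1))·e_{n-1}`, last term omitted for `n = 0`. -/
noncomputable def jacobiOp (ω α : ℕ → ℝ) : (ℕ →₀ ℝ) →ₗ[ℝ] (ℕ →₀ ℝ) :=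
  Finsupp.lsum ℝ fun n => LinearMap.toSpanSingleton ℝ (ℕ →₀ ℝ)
    (Real.sqrt (ω n) • Finsupp.single (n + 1) 1 + α n • Finsupp.single n 1 +
      if n = 0 then 0 else Real.sqrt (ω (n - 1)) • Finsupp.single (n - 1) 1)

/-- The Jacobi sequence of the uniform distribution on `[-1, 1]`. -/
noncomputable def uniformOmega (n : ℕ) : ℝ :=
  ((n : ℝ) + 1) ^ 2 / ((2 * (n : ℝ) + 1) * (2 * (n : ℝ) + 3))

/-!
Since `ω n → 1/4`, for fixed `m` and `d` the entry `⟨X^m e_k, e_{k+d}⟩` converges as `k → ∞` to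
the corresponding entry of the free Jacobi matrix with `ω ≡ 1/4`, i.e. to `2⁻ᵐ` times the number
of `±1` walks of length `m` from `0` to `d`. That number is `(2ᵐ/π) ∫₀^π cosᵐ θ cos (d θ) dθ`,
because `2 cos θ cos (d θ) = cos ((d - 1) θ) + cos ((d + 1) θ)` gives both the same recursion
in `m`. The substitution `x = √2 cos θ` turns the arcsine moments into these integrals with
`d = 0`, and the normalization `1/√(ω k + ω (k - 1)) → √2` supplies the factor `√2ᵐ`.
-/

open Real Set MeasureTheory intervalIntegral Topology

theorem jacobiOp_apply (ω α : ℕ → ℝ) (f : ℕ →₀ ℝ) (j : ℕ) :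
    jacobiOp ω α f j =
      (if j = 0 then 0 else √(ω (j - 1)) * f (j - 1)) + α j * f j + √(ω j) * f (j + 1) := by
  induction f using Finsupp.induction_linear with
  | zero => simp
  | add f g hf hg => simp only [map_add, Finsupp.add_apply, hf, hg]; split_ifs <;> ring
  | single n v =>
    rcases n with _ | n <;> rcases j with _ | j <;>
      simp [jacobiOp, Finsupp.single_apply, mul_comm] <;> (try split_ifs) <;>
      first | omega | (subst_vars; rfl)

noncomputable def cosPowCoeff (m : ℕ) (d : ℤ) : ℝ :=
  (∫ θ in 0..π, cos θ ^ m * cos (d * θ)) / π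

theorem cosPowCoeff_zero (d : ℤ) : cosPowCoeff 0 d = if d = 0 then 1 else 0 := by
  rw [cosPowCoeff]
  split_ifs with hd
  · simp [hd, pi_ne_zero]
  · have hd' : (d : ℝ) ≠ 0 := Int.cast_ne_zero.2 hd
    simp only [pow_zero, one_mul, integral_comp_mul_left (fun θ => cos θ) hd', integral_cos,
      mul_zero, sin_zero, sin_int_mul_pi, sub_zero, smul_zero, zero_div]

theorem cosPowCoeff_succ (m : ℕ) (d : ℤ) :
    cosPowCoeff (m + 1) d = (cosPowCoeff m (d - 1) + cosPowCoeff m (d + 1)) / 2 := by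
  have hprod (θ : ℝ) : cos θ ^ (m + 1) * cos (d * θ) =
      (cos θ ^ m * cos ((d - 1 : ℤ) * θ) + cos θ ^ m * cos ((d + 1 : ℤ) * θ)) / 2 := by
    push_cast
    rw [sub_mul, add_mul, one_mul, cos_sub, cos_add]
    ring
  have hint (e : ℤ) : IntervalIntegrable (fun θ => cos θ ^ m * cos (e * θ)) volume 0 π := by
    apply Continuous.intervalIntegrable
    fun_prop
  simp only [cosPowCoeff, hprod, intervalIntegral.integral_div, integral_add (hint _) (hint _)]
  ring

theorem tendsto_jacobiOp_pow_single_apply {ω : ℕ → ℝ} {w : ℝ} (hω : Tendsto ω atTop (𝓝 w))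
    (m : ℕ) (d : ℤ) :
    Tendsto (fun k : ℕ => (jacobiOp ω (fun _ => 0) ^ m) (Finsupp.single k 1) (k + d).toNat)
      atTop (𝓝 ((2 * √w) ^ m * cosPowCoeff m d)) := by
  have hshift (e : ℤ) : Tendsto (fun k : ℕ => ((k : ℤ) + e).toNat) atTop atTop :=
    tendsto_atTop_atTop.2 fun N => ⟨N + e.natAbs, fun k hk => by omega⟩
  induction m generalizing d with
  | zero =>
    refine tendsto_const_nhds.congr' ?_
    filter_upwards [eventually_ge_atTop d.natAbs] with k hk
    rw [cosPowCoeff_zero, pow_zero, pow_zero, one_mul, Module.End.one_apply, Finsupp.single_apply]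
    split_ifs <;> first | rfl | omega
  | succ m ih =>
    have hsqrt (e : ℤ) : Tendsto (fun k : ℕ => √(ω ((k : ℤ) + e).toNat)) atTop (𝓝 (√w)) :=
      (continuous_sqrt.tendsto w).comp (hω.comp (hshift e))
    have hlim := ((hsqrt (d - 1)).mul (ih (d - 1))).add ((hsqrt d).mul (ih (d + 1)))
    rw [cosPowCoeff_succ]
    convert hlim.congr' ?_ using 2
    · ring
    filter_upwards [eventually_ge_atTop (d.natAbs + 1)] with k hk
    have hne : ((k : ℤ) + d).toNat ≠ 0 := by omega
    have hpred : ((k : ℤ) + d).toNat - 1 = ((k : ℤ) + (d - 1)).toNat := by omega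
    have hsucc : ((k : ℤ) + d).toNat + 1 = ((k : ℤ) + (d + 1)).toNat := by omega
    rw [pow_succ', Module.End.mul_apply, jacobiOp_apply, if_neg hne, hpred, hsucc]
    ring

theorem integral_div_sqrt_sq_sub_sq {r : ℝ} (hr : 0 < r) (g : ℝ → ℝ) :
    ∫ x in -r..r, g x / √(r ^ 2 - x ^ 2) = ∫ θ in 0..π, g (r * cos θ) := by
  have himage : (fun θ => r * cos θ) '' Ioo 0 π = Ioo (-r) r := by
    have : cos '' Ioo 0 π = Ioo (-1) 1 := cosPartialHomeomorph.image_source_eq_target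
    rw [← image_image (r * ·) cos, this, image_mul_left_Ioo hr]
    simp
  have hderiv : ∀ θ ∈ Ioo 0 π, HasDerivWithinAt (fun θ => r * cos θ) (-(r * sin θ)) (Ioo 0 π) θ :=
    fun θ _ => by simpa using ((hasDerivAt_cos θ).const_mul r).hasDerivWithinAt
  have hinj : InjOn (fun θ => r * cos θ) (Ioo 0 π) := fun a ha b hb h =>
    injOn_cos (Ioo_subset_Icc_self ha) (Ioo_subset_Icc_self hb) (mul_left_cancel₀ hr.ne' h)
  rw [integral_of_le (by linarith), integral_of_le pi_pos.le, integral_Ioc_eq_integral_Ioo,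
    integral_Ioc_eq_integral_Ioo, ← himage,
    integral_image_eq_integral_abs_deriv_smul measurableSet_Ioo hderiv hinj]
  refine setIntegral_congr_fun measurableSet_Ioo fun θ hθ => ?_
  have hsin : 0 < sin θ := sin_pos_of_pos_of_lt_pi hθ.1 hθ.2
  have hsqrt : √(r ^ 2 - (r * cos θ) ^ 2) = r * sin θ := by
    rw [← sqrt_sq (mul_pos hr hsin).le, mul_pow, mul_pow, sin_sq]
    ring_nf
  simp only [smul_eq_mul, hsqrt, abs_neg, abs_of_pos (mul_pos hr hsin)]
  field_simp

theorem integral_pow_div_pi_mul_sqrt_sq_sub_sq {r : ℝ} (hr : 0 < r) (m : ℕ) :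
    ∫ x in -r..r, x ^ m / (π * √(r ^ 2 - x ^ 2)) = r ^ m * cosPowCoeff m 0 := by
  simp_rw [← div_div, integral_div_sqrt_sq_sub_sq hr, mul_pow, intervalIntegral.integral_div,
    intervalIntegral.integral_const_mul, cosPowCoeff, Int.cast_zero, zero_mul, cos_zero, mul_one]
  ring

theorem tendsto_uniformOmega : Tendsto uniformOmega atTop (𝓝 (1 / 4)) := by
  have hdecomp (n : ℕ) : uniformOmega n = 1 / 4 + ((2 * (n : ℝ) + 1) * (2 * n + 3))⁻¹ / 4 := by
    rw [uniformOmega]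
    field_simp
    ring
  have hden : Tendsto (fun n : ℕ => (2 * (n : ℝ) + 1) * (2 * n + 3)) atTop atTop :=
    tendsto_atTop_mono (fun n => by nlinarith [(n.cast_nonneg : (0 : ℝ) ≤ n)])
      tendsto_natCast_atTop_atTop
  rw [funext hdecomp]
  simpa using (tendsto_const_nhds (x := (1 / 4 : ℝ))).add
    ((tendsto_inv_atTop_zero.comp hden).div_const 4)

/-- Classical limit of the quantum decomposition of the uniform distribution on `[-1,1]`
(`ω n = (n+1)²/((2n+1)(2n+3))`, `α n = 0`): the normalized moments converge to those of
the arcsine law. -/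
theorem uniform_classical_limit_arcsine (m : ℕ) :
    Tendsto
      (fun k : ℕ =>
        ((((1 / Real.sqrt (uniformOmega k + uniformOmega (k - 1))) •
            jacobiOp uniformOmega (fun _ => 0)) ^ m)
          (Finsupp.single k 1)) k)
      atTop
      (nhds (∫ x in (-Real.sqrt 2)..(Real.sqrt 2), x ^ m / (Real.pi * Real.sqrt (2 - x ^ 2)))) := by
  have hnorm : Tendsto (fun k : ℕ => 1 / √(uniformOmega k + uniformOmega (k - 1))) atTop
      (𝓝 (√2)) := by
    have hsum := tendsto_uniformOmega.add (tendsto_uniformOmega.comp (tendsto_sub_atTop_nat 1))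
    convert ((continuous_sqrt.tendsto _).comp hsum).inv₀ (by norm_num) using 1
    · simp only [one_div, Function.comp_def]
    · rw [← sqrt_inv]
      norm_num
  have hcoeff := tendsto_jacobiOp_pow_single_apply tendsto_uniformOmega m 0
  have hscale : 2 * √(1 / 4 : ℝ) = 1 := by
    rw [show (1 / 4 : ℝ) = (1 / 2) ^ 2 by norm_num, sqrt_sq (by norm_num)]
    norm_num
  have hmoment := integral_pow_div_pi_mul_sqrt_sq_sub_sq (sqrt_pos.2 two_pos) m
  rw [sq_sqrt two_pos.le] at hmoment
  rw [hmoment]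
  simp only [hscale, one_pow, one_mul, add_zero, Int.toNat_natCast] at hcoeff
  simpa only [smul_pow, LinearMap.smul_apply, Finsupp.smul_apply, smul_eq_mul] using
    (hnorm.pow m).mul hcoeff
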